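/- For real u with e^{2u}+e^{−2u} ≥ 3, ℓ(u)² + ℓ(u)^{−2} = (e^{4u} − e^{2u} − 2 − e^{−2u} + e^{−4u})² − 2, where ℓ(u) is as above. -/
import Mathlib


noncomputable def arcosh (x : ℝ) : ℝ := Real.log (x + Real.sqrt (x^2 - 1))

noncomputable def kappa : ℝ := arcosh (3/2) / 2

noncomputable def ellE (u : ℝ) : ℝ :=
  (1/2) * (Real.exp (4*u) - Real.exp (2*u) - 2 - Real.exp (-(2*u)) + Real.exp (-(4*u))) +
    ((Real.exp (2*u) - Real.exp (-(2*u)))/2) *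
      Real.sqrt ((Real.exp (2*u) + Real.exp (-(2*u)) + 1) * (Real.exp (2*u) + Real.exp (-(2*u)) - 3))

theorem stmt9 (u : ℝ) (hu : 3 ≤ Real.exp (2*u) + Real.exp (-(2*u))) :
    (ellE u)^2 + ((ellE u)^2)⁻¹ =
      (Real.exp (4*u) - Real.exp (2*u) - 2 - Real.exp (-(2*u)) + Real.exp (-(4*u)))^2 - 2 := by
  set x := Real.exp (2*u) with hx
  set y := Real.exp (-(2*u)) with hy
  have hxy : x * y = 1 := by
    rw [hx, hy, ← Real.exp_add]
    norm_num
  have hx4 : Real.exp (4*u) = x^2 := by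
    rw [hx, sq, ← Real.exp_add]; ring_nf
  have hy4 : Real.exp (-(4*u)) = y^2 := by
    rw [hy, sq, ← Real.exp_add]; ring_nf
  set S := Real.sqrt ((x + y + 1) * (x + y - 3)) with hS
  have hS2 : S^2 = (x + y + 1) * (x + y - 3) := by
    rw [hS, Real.sq_sqrt]
    apply mul_nonneg <;> linarith
  set A : ℝ := x^2 - x - 2 - y + y^2 with hA
  have hell : ellE u = A/2 + (x - y)/2 * S := by
    rw [ellE, hx4, hy4, ← hx, ← hy, ← hS, hA]; ring
  -- key quadratic relation
  have hkey : (ellE u)^2 = A * ellE u - 1 := by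
    rw [hell]
    have : (A/2 + (x - y)/2 * S)^2 = A^2/4 + ((x-y)/2)^2 * S^2 + A * ((x-y)/2 * S) := by ring
    rw [this, hS2]
    have h2 : A^2/4 - ((x-y)/2)^2 * ((x + y + 1) * (x + y - 3)) = 1 := by
      rw [hA]
      linear_combination (x*y - x - y) * hxy
    nlinarith [h2]
  have hne : ellE u ≠ 0 := by
    intro h
    rw [h] at hkey
    norm_num at hkey
  have hinv : ((ellE u)^2)⁻¹ = A^2 - 2 - (ellE u)^2 := by
    have hmul : (ellE u)^2 * (A^2 - 2 - (ellE u)^2) = 1 := by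
      nlinarith [hkey]
    field_simp
    nlinarith [hmul]
  rw [hx4, hy4, hinv, hA]
  ring
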